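/- Every overlap-free binary square has length either 2^i or 3·2^i for some i ≥ 1. -/

import Mathlib

/-!
Every overlap-free binary word factors as `p μ(y) s` with `p` and `s` among `ε, a, aa`: appending
a letter either extends `s` or, after a run `aa`, forces a re-parse which only a short `y` survives.
If `xx` is an overlap-free square with `|x| = n ≥ 8`, the period `n` of `xx` passes to `μ(y)`.
For odd `n`, comparing `μ(y)` with its shift by `n` produces a cube in `y`, hence an overlap in
`μ(y)`. For even `n = 2m`, both copies of `x` start at the same phase of the `μ`-blocks, which
forces `x = μ(z)` or `x = !b μ(t) b`; in either case `zz` (with `z = t b` in the second) is an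
overlap-free square with `|z| = m`. Induction on `n`, with `n = 5, 7` checked by computation,
gives `n = 2^j` or `n = 3·2^j`.
-/

/-- Thue–Morse morphism: μ(0)=01, μ(1)=10, encoding 0 = false, 1 = true. -/
def mu (w : List Bool) : List Bool := w.flatMap fun b => [b, !b]

/-- A word is an overlap if it has the form a·x·a·x·a for a letter a. -/
def IsOverlap (w : List Bool) : Prop :=
  ∃ (a : Bool) (x : List Bool), w = [a] ++ x ++ [a] ++ x ++ [a]

/-- A word contains an overlap as a factor. -/
def HasOverlap (w : List Bool) : Prop := ∃ f, f <:+: w ∧ IsOverlap f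

/-- A word is overlap-free if no factor is an overlap. -/
def OverlapFree (w : List Bool) : Prop := ∀ f, f <:+: w → ¬ IsOverlap f

@[simp] lemma mu_nil : mu [] = [] := rfl

@[simp] lemma mu_cons (b : Bool) (l : List Bool) : mu (b :: l) = b :: (!b) :: mu l := rfl

@[simp] lemma mu_append (l₁ l₂ : List Bool) : mu (l₁ ++ l₂) = mu l₁ ++ mu l₂ :=
  List.flatMap_append

@[simp] lemma length_mu (l : List Bool) : (mu l).length = 2 * l.length := by
  induction l with
  | nil => rfl
  | cons b l ih => simp [ih]; ring

lemma reverse_mu (l : List Bool) : (mu l).reverse = mu (l.reverse.map not) := by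
  induction l with
  | nil => rfl
  | cons b l ih => simp [ih]

lemma getElem?_mu_two_mul (l : List Bool) (j : ℕ) : (mu l)[2 * j]? = l[j]? := by
  induction l generalizing j with
  | nil => simp
  | cons b l ih => cases j <;> simp [Nat.mul_succ, ih]

lemma getElem?_mu_two_mul_add_one (l : List Bool) (j : ℕ) :
    (mu l)[2 * j + 1]? = l[j]?.map not := by
  induction l generalizing j with
  | nil => simp
  | cons b l ih => cases j <;> simp [Nat.mul_succ, ih]

lemma take_mu (y : List Bool) (k : ℕ) : (mu y).take (2 * k) = mu (y.take k) := by
  induction y generalizing k with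
  | nil => simp
  | cons b y ih => cases k <;> simp [Nat.mul_succ, ih]

section Period

variable {α : Type*}

def HasPeriod (w : List α) (n : ℕ) : Prop := ∀ i, i + n < w.length → w[i]? = w[i + n]?

lemma hasPeriod_append_self (x : List α) : HasPeriod (x ++ x) x.length := by
  intro i hi
  rw [List.length_append] at hi
  rw [List.getElem?_append_left (by omega), List.getElem?_append_right (by omega),
    Nat.add_sub_cancel]

lemma HasPeriod.infix {v w : List α} {n : ℕ} (hw : HasPeriod w n) (h : v <:+: w) :
    HasPeriod v n := by
  obtain ⟨k, hk, hvw⟩ := List.infix_iff_getElem?.1 h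
  intro i hi
  rw [List.getElem?_eq_getElem (by omega), List.getElem?_eq_getElem hi, ← hvw _ (by omega),
    ← hvw _ hi, hw _ (by omega), Nat.add_right_comm]

end Period

lemma exists_cube_infix_of_hasPeriod_mu {y : List Bool} {m : ℕ}
    (hper : HasPeriod (mu y) (2 * m + 1)) (hy : m + 3 ≤ y.length) :
    ∃ a, [a, a, a] <:+: y := by
  have hA : ∀ j, 2 * j + 1 + 2 * m < 2 * y.length → y[j]? = y[j + m]?.map not := by
    intro j hj
    rw [← getElem?_mu_two_mul, hper _ (by simp; omega),
      show 2 * j + (2 * m + 1) = 2 * (j + m) + 1 by ring, getElem?_mu_two_mul_add_one]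
  have hB : ∀ j, 2 * j + 2 + 2 * m < 2 * y.length → y[j]?.map not = y[j + m + 1]? := by
    intro j hj
    rw [← getElem?_mu_two_mul_add_one, hper _ (by simp; omega),
      show 2 * j + 1 + (2 * m + 1) = 2 * (j + m + 1) by ring, getElem?_mu_two_mul]
  have hm1 : y[m + 1]? = y[m]? := by
    have hA0 := hA 0 (by omega)
    have hB0 := hB 0 (by omega)
    rw [zero_add] at hA0 hB0
    rw [← hB0, hA0]; simp [Function.comp_def]
  have hm2 : y[m + 2]? = y[m]? := by
    have hA1 := hA 1 (by omega)
    have hB1 := hB 1 (by omega)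
    rw [add_comm 1 m] at hA1 hB1
    rw [← hm1, ← hB1, hA1]; simp [Function.comp_def]
  refine ⟨y[m], List.infix_iff_getElem?.2 ⟨m, by simp; omega, fun i hi => ?_⟩⟩
  have hi : i = 0 ∨ i = 1 ∨ i = 2 := by simp at hi; omega
  rcases hi with rfl | rfl | rfl
  · simp
  · simp [add_comm 1 m, hm1]
  · simp [add_comm 2 m, hm2]

lemma OverlapFree.infix {v w : List Bool} (hof : OverlapFree w) (h : v <:+: w) :
    OverlapFree v :=
  fun f hf => hof f (hf.trans h)

namespace OverlapFree

lemma not_cube_infix {w : List Bool} (hof : OverlapFree w) (a : Bool) : ¬ [a, a, a] <:+: w :=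
  fun h => hof _ h ⟨a, [], rfl⟩

/-- An overlap `a u a u a` in `y` becomes the overlap `a (!a μu) a (!a μu) a` in `μ y`,
which ends before the last letter `!a` of `μ(a u a u a)`. -/
lemma of_mu_dropLast {y : List Bool} (hof : OverlapFree (mu y).dropLast) : OverlapFree y := by
  rintro f ⟨l, r, rfl⟩ ⟨a, u, rfl⟩
  refine hof ([a] ++ ((!a) :: mu u) ++ [a] ++ ((!a) :: mu u) ++ [a])
    ⟨mu l, ((!a) :: mu r).dropLast, ?_⟩ ⟨a, _, rfl⟩
  rw [← List.dropLast_append_of_ne_nil (List.cons_ne_nil _ _)]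
  simp

lemma of_mu {y : List Bool} (hof : OverlapFree (mu y)) : OverlapFree y :=
  of_mu_dropLast (hof.infix (List.dropLast_prefix _).isInfix)

end OverlapFree

instance : DecidablePred IsOverlap := fun w =>
  let u := (w.drop 1).take ((w.length - 3) / 2)
  decidable_of_iff (w = [w.headD false] ++ u ++ [w.headD false] ++ u ++ [w.headD false]) <| by
    constructor
    · exact fun h => ⟨_, _, h⟩
    · rintro ⟨a, x, rfl⟩
      have hx : (x.length + (x.length + 1 + 1) - 2) / 2 = x.length := by omega
      simp [u, hx]

instance : DecidablePred OverlapFree := fun w =>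
  decidable_of_iff (∀ t ∈ w.tails, ∀ f ∈ t.inits, ¬ IsOverlap f) <| by
    simp only [List.mem_tails, List.mem_inits, OverlapFree, List.infix_iff_prefix_suffix]
    exact ⟨fun h f ⟨t, hft, htw⟩ => h t htw f hft,
      fun h t htw f hft => h f ⟨t, hft, htw⟩⟩

lemma not_overlapFree_append_self_of_length_eq_five (x : List Bool) (hx : x.length = 5) :
    ¬ OverlapFree (x ++ x) :=
  (by decide : ∀ v : List.Vector Bool 5, ¬ OverlapFree (v.1 ++ v.1)) ⟨x, hx⟩

set_option maxRecDepth 10000 in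
lemma not_overlapFree_append_self_of_length_eq_seven (x : List Bool) (hx : x.length = 7) :
    ¬ OverlapFree (x ++ x) :=
  (by decide : ∀ v : List.Vector Bool 7, ¬ OverlapFree (v.1 ++ v.1)) ⟨x, hx⟩

def IsShortRun (p : List Bool) : Prop := p = [] ∨ (∃ a, p = [a]) ∨ ∃ a, p = [a, a]

lemma IsShortRun.length_le {p : List Bool} (hp : IsShortRun p) : p.length ≤ 2 := by
  rcases hp with rfl | ⟨a, rfl⟩ | ⟨a, rfl⟩ <;> simp

lemma OverlapFree.exists_mu_factorization_cons {p v : List Bool} {a : Bool} (hp : IsShortRun p)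
    (hof : OverlapFree (p ++ a :: mu v)) :
    ∃ p' y', IsShortRun p' ∧ p ++ a :: mu v = p' ++ mu y' := by
  rcases hp with rfl | ⟨b, rfl⟩ | ⟨b, rfl⟩
  · exact ⟨[a], v, .inr (.inl ⟨a, rfl⟩), rfl⟩
  · rcases Bool.eq_or_eq_not b a with h | h <;> subst b
    · exact ⟨[a, a], v, .inr (.inr ⟨a, rfl⟩), rfl⟩
    · exact ⟨[], (!a) :: v, .inl rfl, by simp⟩
  · rcases Bool.eq_or_eq_not b a with h | h <;> subst b
    · exact absurd ⟨[], mu v, rfl⟩ (hof.not_cube_infix a)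
    · exact ⟨[!a], (!a) :: v, .inr (.inl ⟨!a, rfl⟩), by simp⟩

/-- When a run `aa` is followed by `!a`, the cut between the two `a`s must fall on a block
boundary of `μ`, so the parity of the whole factorization flips. This is possible only if the
preceding `μ`-part is short; otherwise an overlap appears. -/
lemma OverlapFree.exists_mu_factorization_of_append_pair {p y : List Bool} {a : Bool}
    (hp : IsShortRun p) (hof : OverlapFree (p ++ mu y ++ [a, a, !a])) :
    ∃ p' y', IsShortRun p' ∧ p ++ mu y ++ [a, a, !a] = p' ++ mu y' := by
  rcases y.eq_nil_or_concat with rfl | ⟨y, d, rfl⟩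
  · simpa using
      OverlapFree.exists_mu_factorization_cons (a := a) (v := [a]) hp (by simpa using hof)
  rw [List.concat_eq_append] at hof ⊢
  rcases Bool.eq_or_eq_not d a with h | h <;> subst d
  · rcases y.eq_nil_or_concat with rfl | ⟨y, e, rfl⟩
    · simpa using
        OverlapFree.exists_mu_factorization_cons (a := a) (v := [!a, a]) hp (by simpa using hof)
    rw [List.concat_eq_append] at hof
    rcases Bool.eq_or_eq_not e a with h | h <;> subst e
    · exact absurd (⟨a, [!a], rfl⟩ : IsOverlap [a, !a, a, !a, a])
        (hof _ ⟨p ++ mu y, [a, !a], by simp⟩)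
    · exact absurd (⟨!a, [a, a], rfl⟩ : IsOverlap [!a, a, a, !a, a, a, !a])
        (hof _ ⟨p ++ mu y, [], by simp⟩)
  · exact absurd ⟨p ++ mu y ++ [!a], [!a], by simp⟩ (hof.not_cube_infix a)

lemma OverlapFree.exists_mu_factorization {w : List Bool} (hof : OverlapFree w) :
    ∃ p y s, IsShortRun p ∧ IsShortRun s ∧ w = p ++ mu y ++ s := by
  induction w using List.reverseRecOn with
  | nil => exact ⟨[], [], [], .inl rfl, .inl rfl, rfl⟩
  | append_singleton w c ih =>
    obtain ⟨p, y, s, hp, hs, rfl⟩ := ih (hof.infix (List.prefix_append _ _).isInfix)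
    rcases hs with rfl | ⟨a, rfl⟩ | ⟨a, rfl⟩
    · exact ⟨p, y, [c], hp, .inr (.inl ⟨c, rfl⟩), by simp⟩
    · rcases Bool.eq_or_eq_not c a with h | h <;> subst c
      · exact ⟨p, y, [a, a], hp, .inr (.inr ⟨a, rfl⟩), by simp⟩
      · exact ⟨p, y ++ [a], [], hp, .inl rfl, by simp⟩
    · rcases Bool.eq_or_eq_not c a with h | h <;> subst c
      · exact absurd ⟨p ++ mu y, [], by simp⟩ (hof.not_cube_infix a)
      · obtain ⟨p', y', hp', h⟩ :=
          OverlapFree.exists_mu_factorization_of_append_pair hp (by simpa using hof)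
        exact ⟨p', y', [], hp', .inl rfl, by simpa using h⟩

lemma even_length_of_overlapFree_append_self {x p y s : List Bool}
    (hof : OverlapFree (x ++ x)) (h : x ++ x = p ++ mu y ++ s) (hp : p.length ≤ 2)
    (hs : s.length ≤ 2) (hx : 8 ≤ x.length) :
    Even x.length := by
  by_contra hodd
  obtain ⟨m, hm⟩ := Nat.not_even_iff_odd.1 hodd
  have hinf : mu y <:+: x ++ x := ⟨p, s, h.symm⟩
  have hlen := congrArg List.length h
  simp only [List.length_append, length_mu] at hlen
  obtain ⟨a, ha⟩ := exists_cube_infix_of_hasPeriod_mu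
    (hm ▸ (hasPeriod_append_self x).infix hinf) (by omega)
  exact (hof.infix hinf).of_mu.not_cube_infix a ha

lemma append_self_ne_pair_append_mu {x y s : List Bool} {a : Bool} {m : ℕ}
    (hx : x.length = 2 * m) (hy : m ≤ y.length) : x ++ x ≠ [a, a] ++ mu y ++ s := by
  intro h
  have hlen := congrArg List.length h
  simp only [List.length_append, List.length_cons, List.length_nil, length_mu, hx] at hlen
  obtain ⟨b, u, hu⟩ := List.exists_cons_of_ne_nil (l := y.drop (m - 1)) (by simp; omega)
  rw [← List.take_append_drop (m - 1) y, hu] at h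
  have h' : x ++ x = ([a, a] ++ mu (y.take (m - 1))) ++ (b :: (!b) :: (mu u ++ s)) := by
    simp [h]
  obtain ⟨hx₁, hx₂⟩ := List.append_inj h' (by simp; omega)
  rw [hx₁] at hx₂
  cases a <;> cases b <;> simp at hx₂

lemma exists_eq_of_append_self_eq_cons_mu {x y : List Bool} {a b : Bool} {m : ℕ}
    (hx : x.length = 2 * m) (h : x ++ x = a :: mu y ++ [b]) : ∃ t, x = (!b) :: mu t ++ [b] := by
  have hlen := congrArg List.length h
  simp only [List.length_append, List.length_cons, List.length_nil, length_mu, hx] at hlen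
  obtain ⟨c, u, hu⟩ := List.exists_cons_of_ne_nil (l := y.drop (m - 1)) (by simp; omega)
  rw [← List.take_append_drop (m - 1) y, hu] at h
  have h' : x ++ x = (a :: mu (y.take (m - 1)) ++ [c]) ++ ((!c) :: mu u ++ [b]) := by
    simp [h]
  obtain ⟨hx₁, hx₂⟩ := List.append_inj h' (by simp; omega)
  obtain ⟨hhead, hlast⟩ := List.append_inj' (hx₁.symm.trans hx₂) rfl
  obtain ⟨rfl, -⟩ := List.cons_eq_cons.1 hhead
  obtain rfl := List.singleton_inj.1 hlast
  exact ⟨_, hx₁⟩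

lemma exists_half_of_overlapFree_append_self {x p y s : List Bool} {m : ℕ}
    (hof : OverlapFree (x ++ x)) (h : x ++ x = p ++ mu y ++ s) (hp : IsShortRun p)
    (hs : IsShortRun s) (hx : x.length = 2 * m) (hm : 2 ≤ m) :
    ∃ z : List Bool, z.length = m ∧ OverlapFree (z ++ z) := by
  have hlen := congrArg List.length h
  simp only [List.length_append, length_mu, hx] at hlen
  rcases hp with rfl | ⟨a, rfl⟩ | ⟨a, rfl⟩
  · rcases hs with rfl | ⟨b, rfl⟩ | ⟨b, rfl⟩
    · have hxy : x = mu (y.take m) := by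
        simpa [List.take_left' hx, take_mu] using congrArg (List.take (2 * m)) h
      rw [hxy, ← mu_append] at hof
      exact ⟨y.take m, by simp at hlen ⊢; omega, hof.of_mu⟩
    · simp at hlen; omega
    · -- reversal turns this into the case `p = b b`
      have hrev := congrArg List.reverse h
      simp only [List.reverse_append, reverse_mu] at hrev
      exact absurd (by simpa using hrev)
        (append_self_ne_pair_append_mu (x := x.reverse) (s := []) (a := b)
          (by simpa using hx) (by simp at hlen ⊢; omega))
  · rcases hs with rfl | ⟨b, rfl⟩ | ⟨b, rfl⟩
    · simp at hlen; omega
    · obtain ⟨t, rfl⟩ := exists_eq_of_append_self_eq_cons_mu hx (by simpa using h)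
      refine ⟨t ++ [b], by simp at hx ⊢; omega, OverlapFree.of_mu_dropLast (hof.infix ?_)⟩
      -- `x x` is `μ(t b t b)` with its last letter moved to the front
      refine ⟨[!b], [], ?_⟩
      simp [List.dropLast_cons_of_ne_nil, List.dropLast_append_of_ne_nil]
    · simp at hlen; omega
  · have := hs.length_le
    exact absurd h (append_self_ne_pair_append_mu hx (by simp at hlen; omega))

theorem exists_length_eq_two_pow_or_three_mul_two_pow {x : List Bool} (hx : x ≠ [])
    (hof : OverlapFree (x ++ x)) : ∃ j, x.length = 2 ^ j ∨ x.length = 3 * 2 ^ j := by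
  induction hn : x.length using Nat.strong_induction_on generalizing x with
  | _ n ih =>
    by_cases hsmall : n < 8
    · have hpos : 0 < n := hn ▸ List.length_pos_iff.2 hx
      interval_cases n
      · exact ⟨0, .inl rfl⟩
      · exact ⟨1, .inl rfl⟩
      · exact ⟨0, .inr rfl⟩
      · exact ⟨2, .inl rfl⟩
      · exact absurd hof (not_overlapFree_append_self_of_length_eq_five x hn)
      · exact ⟨1, .inr rfl⟩
      · exact absurd hof (not_overlapFree_append_self_of_length_eq_seven x hn)
    obtain ⟨p, y, s, hp, hs, h⟩ := hof.exists_mu_factorization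
    obtain ⟨m, hm⟩ :=
      even_length_of_overlapFree_append_self hof h hp.length_le hs.length_le (by omega)
    obtain ⟨z, hz, hofz⟩ :=
      exists_half_of_overlapFree_append_self (m := m) hof h hp hs (by omega) (by omega)
    obtain ⟨j, hj⟩ := ih m (by omega) (List.ne_nil_of_length_pos (by omega)) hofz hz
    exact ⟨j + 1, by rw [pow_succ]; omega⟩

theorem stmt_4 (w x : List Bool) (hx : x ≠ []) (hw : w = x ++ x)
    (hof : OverlapFree w) :
    ∃ i : ℕ, 1 ≤ i ∧ (w.length = 2 ^ i ∨ w.length = 3 * 2 ^ i) := by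
  subst hw
  obtain ⟨j, hj⟩ := exists_length_eq_two_pow_or_three_mul_two_pow hx hof
  exact ⟨j + 1, by omega, by rw [List.length_append, pow_succ]; omega⟩
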